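/- arXiv:2605.16584 — 3 statements merged into one kernel-verified Lean document; each statement's English description precedes it below -/
import Mathlib

section
/- Let A be an r×r real matrix satisfying ‖A^t‖ ≤ ψ_A ρ_A^{t-1} for all t ≥ 0, with constants ψ_A ≥ 1 and 0 < ρ_A < 1. If Δ is an r×r matrix with ‖Δ‖ ≤ ρ_Δ, then for every positive integer n, ‖(A+Δ)^n‖ ≤ (ψ_A/ρ_A)·(ρ_A + (ψ_A/ρ_A)·ρ_Δ)^n. -/
open scoped Matrix.Norms.L2Operator

private lemma ring_pow_add' {R : Type*} [Ring R] (a b : R) :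
    ∀ n : ℕ, (a + b) ^ n = a ^ n + ∑ k ∈ Finset.range n, a ^ (n - 1 - k) * b * (a + b) ^ k
  | 0 => by simp
  | n + 1 => by
    have ih := ring_pow_add' a b n
    have expand : a * (a + b) ^ n
        = a ^ (n + 1) + ∑ k ∈ Finset.range n, a ^ (n - k) * b * (a + b) ^ k := by
      rw [ih, mul_add, Finset.mul_sum, ← pow_succ']
      congr 1
      refine Finset.sum_congr rfl fun k hk => ?_
      rw [Finset.mem_range] at hk
      rw [← mul_assoc, ← mul_assoc, ← pow_succ',
        show n - 1 - k + 1 = n - k from by omega]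
    calc (a + b) ^ (n + 1) = a * (a + b) ^ n + b * (a + b) ^ n := by
          rw [pow_succ', add_mul]
      _ = a ^ (n + 1) + ∑ k ∈ Finset.range (n + 1), a ^ (n + 1 - 1 - k) * b * (a + b) ^ k := by
          rw [expand, Finset.sum_range_succ]
          simp [add_assoc]

private lemma scalar_key (ψA ρA ρΔ : ℝ) (hρ : 0 < ρA) :
    ∀ n : ℕ, ψA * ρA ^ ((n : ℤ) - 1)
      + ∑ k ∈ Finset.range n, ψA * ρA ^ (((n - 1 - k : ℕ) : ℤ) - 1)
          * (ρΔ * ((ψA / ρA) * (ρA + (ψA / ρA) * ρΔ) ^ k))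
      = (ψA / ρA) * (ρA + (ψA / ρA) * ρΔ) ^ n
  | 0 => by
    simp [zpow_neg, div_eq_mul_inv]
  | n + 1 => by
    have ih := scalar_key ψA ρA ρΔ hρ n
    have hne : ρA ≠ 0 := hρ.ne'
    rw [Finset.sum_range_succ]
    have hsum : ∑ k ∈ Finset.range n, ψA * ρA ^ (((n + 1 - 1 - k : ℕ) : ℤ) - 1)
          * (ρΔ * ((ψA / ρA) * (ρA + (ψA / ρA) * ρΔ) ^ k))
        = ρA * ∑ k ∈ Finset.range n, ψA * ρA ^ (((n - 1 - k : ℕ) : ℤ) - 1)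
          * (ρΔ * ((ψA / ρA) * (ρA + (ψA / ρA) * ρΔ) ^ k)) := by
      rw [Finset.mul_sum]
      refine Finset.sum_congr rfl fun k hk => ?_
      rw [Finset.mem_range] at hk
      have he : ((n + 1 - 1 - k : ℕ) : ℤ) - 1 = (((n - 1 - k : ℕ) : ℤ) - 1) + 1 := by omega
      rw [he, zpow_add_one₀ hne]
      ring
    have hpow : ψA * ρA ^ (((n + 1 : ℕ) : ℤ) - 1) = ρA * (ψA * ρA ^ ((n : ℤ) - 1)) := by
      have he : ((n + 1 : ℕ) : ℤ) - 1 = ((n : ℤ) - 1) + 1 := by omega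
      rw [he, zpow_add_one₀ hne]
      ring
    rw [hsum, hpow, show (n + 1 - 1 - n : ℕ) = 0 from by omega, Nat.cast_zero]
    have hlast : (ψA * ρA ^ ((0 : ℤ) - 1)) = ψA / ρA := by
      simp [zpow_neg, div_eq_mul_inv]
    rw [show ρA * (ψA * ρA ^ ((n:ℤ) - 1))
        + (ρA * ∑ k ∈ Finset.range n, ψA * ρA ^ (((n - 1 - k : ℕ) : ℤ) - 1)
            * (ρΔ * ((ψA / ρA) * (ρA + (ψA / ρA) * ρΔ) ^ k))
          + ψA * ρA ^ ((0 : ℤ) - 1)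
            * (ρΔ * ((ψA / ρA) * (ρA + (ψA / ρA) * ρΔ) ^ n)))
      = ρA * (ψA * ρA ^ ((n:ℤ) - 1)
          + ∑ k ∈ Finset.range n, ψA * ρA ^ (((n - 1 - k : ℕ) : ℤ) - 1)
            * (ρΔ * ((ψA / ρA) * (ρA + (ψA / ρA) * ρΔ) ^ k)))
        + (ψA * ρA ^ ((0 : ℤ) - 1))
            * (ρΔ * ((ψA / ρA) * (ρA + (ψA / ρA) * ρΔ) ^ n)) from by ring]
    rw [ih, hlast, pow_succ]
    field_simp

/-- If `‖Aᵗ‖ ≤ ψ_A ρ_A^{t-1}` for all `t ≥ 0`, with `ψ_A ≥ 1`, `0 < ρ_A < 1`,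
and `‖Δ‖ ≤ ρ_Δ`, then `‖(A+Δ)ⁿ‖ ≤ (ψ_A/ρ_A)(ρ_A + (ψ_A/ρ_A) ρ_Δ)ⁿ` for all `n ≥ 1`.
The norm is the `ℓ²` operator norm. -/
theorem perturbed_power_norm_bound {r : ℕ} (A Δ : Matrix (Fin r) (Fin r) ℝ)
    (ψA ρA ρΔ : ℝ) (hψ : 1 ≤ ψA) (hρ0 : 0 < ρA) (hρ1 : ρA < 1)
    (hA : ∀ t : ℕ, ‖A ^ t‖ ≤ ψA * ρA ^ (t - 1 : ℤ))
    (hΔ : ‖Δ‖ ≤ ρΔ) (n : ℕ) (hn : 0 < n) :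
    ‖(A + Δ) ^ n‖ ≤ (ψA / ρA) * (ρA + (ψA / ρA) * ρΔ) ^ n := by
  have hρΔ0 : 0 ≤ ρΔ := (norm_nonneg Δ).trans hΔ
  have hψ0 : 0 < ψA := lt_of_lt_of_le one_pos hψ
  have hq0 : 0 < ρA + (ψA / ρA) * ρΔ := by
    have : 0 ≤ (ψA / ρA) * ρΔ := by positivity
    linarith
  suffices h : ∀ m : ℕ, ‖(A + Δ) ^ m‖ ≤ (ψA / ρA) * (ρA + (ψA / ρA) * ρΔ) ^ m from h n
  intro m
  induction m using Nat.strong_induction_on with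
  | _ m ih =>
    have h2 : ‖∑ k ∈ Finset.range m, A ^ (m - 1 - k) * Δ * (A + Δ) ^ k‖
        ≤ ∑ k ∈ Finset.range m, ψA * ρA ^ (((m - 1 - k : ℕ) : ℤ) - 1)
            * (ρΔ * ((ψA / ρA) * (ρA + (ψA / ρA) * ρΔ) ^ k)) := by
      refine (norm_sum_le _ _).trans (Finset.sum_le_sum fun k hk => ?_)
      rw [Finset.mem_range] at hk
      have hz : (0:ℝ) < ρA ^ (((m - 1 - k : ℕ) : ℤ) - 1) := zpow_pos hρ0 _
      calc ‖A ^ (m - 1 - k) * Δ * (A + Δ) ^ k‖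
          ≤ ‖A ^ (m - 1 - k) * Δ‖ * ‖(A + Δ) ^ k‖ := norm_mul_le _ _
        _ ≤ (‖A ^ (m - 1 - k)‖ * ‖Δ‖) * ‖(A + Δ) ^ k‖ :=
            mul_le_mul_of_nonneg_right (norm_mul_le _ _) (norm_nonneg _)
        _ ≤ (ψA * ρA ^ (((m - 1 - k : ℕ) : ℤ) - 1) * ρΔ)
              * ((ψA / ρA) * (ρA + (ψA / ρA) * ρΔ) ^ k) := by
            refine mul_le_mul (mul_le_mul (hA _) hΔ (norm_nonneg _) (by positivity))
              (ih k hk) (norm_nonneg _) (by positivity)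
        _ = ψA * ρA ^ (((m - 1 - k : ℕ) : ℤ) - 1)
              * (ρΔ * ((ψA / ρA) * (ρA + (ψA / ρA) * ρΔ) ^ k)) := by ring
    calc ‖(A + Δ) ^ m‖
        = ‖A ^ m + ∑ k ∈ Finset.range m, A ^ (m - 1 - k) * Δ * (A + Δ) ^ k‖ := by
          rw [← ring_pow_add']
      _ ≤ ‖A ^ m‖ + ‖∑ k ∈ Finset.range m, A ^ (m - 1 - k) * Δ * (A + Δ) ^ k‖ :=
          norm_add_le _ _
      _ ≤ ψA * ρA ^ ((m : ℤ) - 1)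
            + ∑ k ∈ Finset.range m, ψA * ρA ^ (((m - 1 - k : ℕ) : ℤ) - 1)
              * (ρΔ * ((ψA / ρA) * (ρA + (ψA / ρA) * ρΔ) ^ k)) :=
          add_le_add (hA m) h2
      _ = (ψA / ρA) * (ρA + (ψA / ρA) * ρΔ) ^ m := scalar_key ψA ρA ρΔ hρ0 m
end

section
/- Let A be an r×r real matrix satisfying ‖A^t‖ ≤ ψ_A ρ_A^{t-1} for all t ≥ 0, with ψ_A ≥ 1 and 0 < ρ_A < 1. If Δ is an r×r matrix with ‖Δ‖ ≤ ρ_Δ, then for every positive integer n, ‖(A+Δ)^n − A^n‖ ≤ n·(ψ_A/ρ_A)^2·(ρ_A + (ψ_A/ρ_A)·ρ_Δ)^{n-1}·ρ_Δ. -/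
open scoped Matrix.Norms.L2Operator

open Finset in
/-- Telescoping identity for powers of a perturbed element in a ring. -/
lemma pow_add_sub_pow_eq_sum {R : Type*} [Ring R] (A Δ : R) (m : ℕ) :
    (A + Δ) ^ m - A ^ m =
      ∑ k ∈ Finset.range m, A ^ k * Δ * (A + Δ) ^ (m - 1 - k) := by
  induction m with
  | zero => simp
  | succ m ih =>
    have h1 : (A + Δ) ^ (m + 1) - A ^ (m + 1)
        = A * ((A + Δ) ^ m - A ^ m) + Δ * (A + Δ) ^ m := by
      rw [pow_succ', pow_succ']
      noncomm_ring
    rw [h1, ih, Finset.mul_sum, Finset.sum_range_succ']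
    congr 1
    · apply Finset.sum_congr rfl
      intro k hk
      have hk' : k < m := Finset.mem_range.mp hk
      have : m + 1 - 1 - (k + 1) = m - 1 - k := by omega
      rw [this, pow_succ']
      noncomm_ring
    · simp

open Finset in
/-- Matrix power perturbation bound (Lemma 3): if `‖Aᵗ‖ ≤ ψ_A ρ_A^{t-1}` for all `t ≥ 0`
with `ψ_A ≥ 1`, `0 < ρ_A < 1`, and `‖Δ‖ ≤ ρ_Δ`, then for every `n ≥ 1`,
`‖(A+Δ)ⁿ − Aⁿ‖ ≤ n (ψ_A/ρ_A)² (ρ_A + (ψ_A/ρ_A) ρ_Δ)^{n-1} ρ_Δ`. -/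
theorem power_perturbation_bound {r : ℕ} (A Δ : Matrix (Fin r) (Fin r) ℝ)
    (ψA ρA ρΔ : ℝ) (hψ : 1 ≤ ψA) (hρ0 : 0 < ρA) (hρ1 : ρA < 1)
    (hA : ∀ t : ℕ, ‖A ^ t‖ ≤ ψA * ρA ^ (t - 1 : ℤ))
    (hΔ : ‖Δ‖ ≤ ρΔ) (n : ℕ) (hn : 0 < n) :
    ‖(A + Δ) ^ n - A ^ n‖ ≤
      (n : ℝ) * (ψA / ρA) ^ 2 * (ρA + (ψA / ρA) * ρΔ) ^ (n - 1) * ρΔ := by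
  set q : ℝ := ψA / ρA with hq
  set σ : ℝ := ρA + q * ρΔ with hσ
  have hρne : ρA ≠ 0 := ne_of_gt hρ0
  have hρΔ0 : 0 ≤ ρΔ := le_trans (norm_nonneg _) hΔ
  have hq0 : 0 < q := div_pos (lt_of_lt_of_le one_pos hψ) hρ0
  have hρσ : ρA ≤ σ := le_add_of_nonneg_right (mul_nonneg hq0.le hρΔ0)
  have hσ0 : 0 < σ := lt_of_lt_of_le hρ0 hρσ
  -- cleaner power bound for A
  have hA' : ∀ t : ℕ, ‖A ^ t‖ ≤ q * ρA ^ t := by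
    intro t
    have := hA t
    calc ‖A ^ t‖ ≤ ψA * ρA ^ ((t : ℤ) - 1) := this
      _ = q * ρA ^ t := by
          rw [zpow_sub_one₀ hρne, zpow_natCast]
          field_simp [hq]
          rw [hq]; field_simp
  -- bound on powers of (A + Δ)
  have hB : ∀ m : ℕ, ‖(A + Δ) ^ m‖ ≤ q * σ ^ m := by
    intro m
    induction m using Nat.strong_induction_on with
    | _ m ih =>
      have hid := pow_add_sub_pow_eq_sum A Δ m
      have h1 : ‖(A + Δ) ^ m‖ ≤ ‖A ^ m‖ +
          ∑ k ∈ Finset.range m, ‖A ^ k * Δ * (A + Δ) ^ (m - 1 - k)‖ := by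
        calc ‖(A + Δ) ^ m‖ = ‖A ^ m + ((A + Δ) ^ m - A ^ m)‖ := by congr 1; abel
          _ ≤ ‖A ^ m‖ + ‖(A + Δ) ^ m - A ^ m‖ := norm_add_le _ _
          _ ≤ _ := add_le_add (le_refl _) (by rw [hid]; exact norm_sum_le _ _)
      have h2 : ∑ k ∈ Finset.range m, ‖A ^ k * Δ * (A + Δ) ^ (m - 1 - k)‖
          ≤ ∑ k ∈ Finset.range m, q * ρA ^ k * ρΔ * (q * σ ^ (m - 1 - k)) := by
        apply Finset.sum_le_sum
        intro k hk
        have hk' : k < m := Finset.mem_range.mp hk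
        calc ‖A ^ k * Δ * (A + Δ) ^ (m - 1 - k)‖
            ≤ ‖A ^ k * Δ‖ * ‖(A + Δ) ^ (m - 1 - k)‖ := norm_mul_le _ _
          _ ≤ (‖A ^ k‖ * ‖Δ‖) * ‖(A + Δ) ^ (m - 1 - k)‖ := by
              gcongr; exact norm_mul_le _ _
          _ ≤ (q * ρA ^ k * ρΔ) * (q * σ ^ (m - 1 - k)) := by
              have hAk := hA' k
              have hBk := ih (m - 1 - k) (by omega)
              have h0 : (0:ℝ) ≤ ‖A ^ k‖ := norm_nonneg _
              have h0' : (0:ℝ) ≤ ‖Δ‖ := norm_nonneg _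
              have hn1 : (0:ℝ) ≤ q * ρA ^ k := by positivity
              exact mul_le_mul (mul_le_mul hAk hΔ h0' hn1) hBk (norm_nonneg _)
                (by positivity)
      have hgeom : ∑ k ∈ Finset.range m, ρA ^ k * σ ^ (m - 1 - k) * (q * ρΔ)
          = σ ^ m - ρA ^ m := by
        have := geom_sum₂_mul (R := ℝ) ρA σ m
        have hσρ : σ - ρA = q * ρΔ := by rw [hσ]; ring
        calc ∑ k ∈ Finset.range m, ρA ^ k * σ ^ (m - 1 - k) * (q * ρΔ)
            = (∑ k ∈ Finset.range m, ρA ^ k * σ ^ (m - 1 - k)) * (q * ρΔ) := by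
              rw [Finset.sum_mul]
          _ = -((∑ k ∈ Finset.range m, ρA ^ k * σ ^ (m - 1 - k)) * (ρA - σ)) := by
              rw [← hσρ]; ring
          _ = -(ρA ^ m - σ ^ m) := by rw [this]
          _ = σ ^ m - ρA ^ m := by ring
      have h3 : ∑ k ∈ Finset.range m, q * ρA ^ k * ρΔ * (q * σ ^ (m - 1 - k))
          = q * (σ ^ m - ρA ^ m) := by
        rw [← hgeom, Finset.mul_sum]
        apply Finset.sum_congr rfl
        intro k _; ring
      calc ‖(A + Δ) ^ m‖ ≤ ‖A ^ m‖ + ∑ k ∈ Finset.range m,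
              ‖A ^ k * Δ * (A + Δ) ^ (m - 1 - k)‖ := h1
        _ ≤ q * ρA ^ m + q * (σ ^ m - ρA ^ m) := by
            rw [← h3]; exact add_le_add (hA' m) h2
        _ = q * σ ^ m := by ring
  -- main estimate
  have hid := pow_add_sub_pow_eq_sum A Δ n
  calc ‖(A + Δ) ^ n - A ^ n‖
      ≤ ∑ k ∈ Finset.range n, ‖A ^ k * Δ * (A + Δ) ^ (n - 1 - k)‖ := by
        rw [hid]; exact norm_sum_le _ _
    _ ≤ ∑ k ∈ Finset.range n, q ^ 2 * σ ^ (n - 1) * ρΔ := by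
        apply Finset.sum_le_sum
        intro k hk
        have hk' : k < n := Finset.mem_range.mp hk
        have step : ‖A ^ k * Δ * (A + Δ) ^ (n - 1 - k)‖
            ≤ (q * ρA ^ k * ρΔ) * (q * σ ^ (n - 1 - k)) := by
          calc ‖A ^ k * Δ * (A + Δ) ^ (n - 1 - k)‖
              ≤ ‖A ^ k * Δ‖ * ‖(A + Δ) ^ (n - 1 - k)‖ := norm_mul_le _ _
            _ ≤ (‖A ^ k‖ * ‖Δ‖) * ‖(A + Δ) ^ (n - 1 - k)‖ := by
                gcongr; exact norm_mul_le _ _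
            _ ≤ (q * ρA ^ k * ρΔ) * (q * σ ^ (n - 1 - k)) := by
                exact mul_le_mul (mul_le_mul (hA' k) hΔ (norm_nonneg _)
                  (by positivity)) (hB _) (norm_nonneg _) (by positivity)
        refine le_trans step ?_
        have hpow : ρA ^ k * σ ^ (n - 1 - k) ≤ σ ^ (n - 1) := by
          have h1 : ρA ^ k ≤ σ ^ k := pow_le_pow_left₀ hρ0.le hρσ k
          have h2 : σ ^ k * σ ^ (n - 1 - k) = σ ^ (n - 1) := by
            rw [← pow_add]; congr 1; omega
          calc ρA ^ k * σ ^ (n - 1 - k) ≤ σ ^ k * σ ^ (n - 1 - k) := by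
                gcongr
            _ = σ ^ (n - 1) := h2
        calc (q * ρA ^ k * ρΔ) * (q * σ ^ (n - 1 - k))
            = q ^ 2 * (ρA ^ k * σ ^ (n - 1 - k)) * ρΔ := by ring
          _ ≤ q ^ 2 * σ ^ (n - 1) * ρΔ := by gcongr
    _ = (n : ℝ) * q ^ 2 * σ ^ (n - 1) * ρΔ := by
        rw [Finset.sum_const, Finset.card_range, nsmul_eq_mul]; ring
end

section
/- Let A ∈ ℝ^{r×r} satisfy ‖A^t‖ ≤ ψ_A ρ_A^{t-1} for all t ≥ 0 with ψ_A ≥ 1, 0 < ρ_A < 1, and let Â satisfy ‖Â − A‖ ≤ ρ_Δ with ρ_A + (ψ_A/ρ_A)ρ_Δ < 1. Then for any matrix C with ‖C‖ ≤ 1, the observability matrices O(C) = [C; CA; …; CA^{r-1}] and Ô(C) = [C; CÂ; …; CÂ^{r-1}] satisfy ‖Ô(C) − O(C)‖ ≤ (ψ_A/ρ_A)² · ρ_Δ / (1 − ρ_A − (ψ_A/ρ_A)ρ_Δ)². -/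
open Matrix
open scoped Matrix.Norms.L2Operator

lemma sub_pow_eq_sum {R : Type*} [Ring R] (x y : R) (m : ℕ) :
    x ^ m - y ^ m = ∑ k ∈ Finset.range m, x ^ (m - 1 - k) * (x - y) * y ^ k := by
  induction m with
  | zero => simp
  | succ m ih =>
    rw [Finset.sum_range_succ]
    have h1 : ∀ k ∈ Finset.range m,
        x ^ (m + 1 - 1 - k) * (x - y) * y ^ k = x * (x ^ (m - 1 - k) * (x - y) * y ^ k) := by
      intro k hk
      rw [Finset.mem_range] at hk
      have h2 : m + 1 - 1 - k = (m - 1 - k) + 1 := by omega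
      rw [h2, pow_succ']; noncomm_ring
    rw [Finset.sum_congr rfl h1, ← Finset.mul_sum, ← ih]
    have h3 : m + 1 - 1 - m = 0 := by omega
    rw [h3, pow_zero, one_mul, pow_succ', pow_succ']
    noncomm_ring

noncomputable def embMat (r n : ℕ) (i : Fin r) : Matrix (Fin r × Fin n) (Fin n) ℝ :=
  Matrix.of fun p c => if p.1 = i ∧ p.2 = c then 1 else 0

lemma embMat_conjTranspose_mul_self (r n : ℕ) (i : Fin r) :
    (embMat r n i)ᴴ * embMat r n i = 1 := by
  ext c c'
  simp [embMat, Matrix.mul_apply, Matrix.one_apply, Fintype.sum_prod_type, ite_and,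
    Finset.sum_ite_eq, Finset.sum_ite_eq', eq_comm]

lemma l2_norm_one_le (n : ℕ) : ‖(1 : Matrix (Fin n) (Fin n) ℝ)‖ ≤ 1 := by
  rw [Matrix.l2_opNorm_def]
  have h : (Matrix.toEuclideanLin.trans LinearMap.toContinuousLinearMap)
      (1 : Matrix (Fin n) (Fin n) ℝ) = ContinuousLinearMap.id ℝ (EuclideanSpace ℝ (Fin n)) := by
    ext1 x
    simp [Matrix.toEuclideanLin_apply]
  rw [h]
  exact ContinuousLinearMap.norm_id_le

lemma embMat_norm_le (r n : ℕ) (i : Fin r) : ‖embMat r n i‖ ≤ 1 := by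
  have h := Matrix.l2_opNorm_conjTranspose_mul_self (embMat r n i)
  rw [embMat_conjTranspose_mul_self] at h
  have h1 := l2_norm_one_le n
  nlinarith [norm_nonneg (embMat r n i)]

/-- Observability matrix `O(C) = [C; CA; …; CA^{r-1}]` (stacked vertically). -/
noncomputable def obsMatrix {r n : ℕ} (A : Matrix (Fin r) (Fin r) ℝ)
    (C : Matrix (Fin n) (Fin r) ℝ) : Matrix (Fin r × Fin n) (Fin r) ℝ :=
  Matrix.of fun p j => (C * A ^ (p.1 : ℕ)) p.2 j


lemma obs_decomp {r n : ℕ} (A Ahat : Matrix (Fin r) (Fin r) ℝ)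
    (C : Matrix (Fin n) (Fin r) ℝ) :
    obsMatrix Ahat C - obsMatrix A C
      = ∑ i : Fin r, embMat r n i * (C * (Ahat ^ (i : ℕ) - A ^ (i : ℕ))) := by
  ext p j
  rw [Matrix.sub_apply, Matrix.sum_apply]
  have key : ∀ i ∈ Finset.univ, (embMat r n i * (C * (Ahat ^ (i : ℕ) - A ^ (i : ℕ)))) p j
      = if p.1 = i then (C * (Ahat ^ (i : ℕ) - A ^ (i : ℕ))) p.2 j else 0 := by
    intro i _
    simp [embMat, Matrix.mul_apply, ite_and, ite_mul, Finset.sum_ite_eq]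
  rw [Finset.sum_congr rfl key, Finset.sum_ite_eq]
  simp [obsMatrix, Matrix.mul_sub]

/-- Perturbation bound for observability matrices: if `‖Aᵗ‖ ≤ ψ_A ρ_A^{t-1}` for all
`t ≥ 0` (`ψ_A ≥ 1`, `0 < ρ_A < 1`), `‖Â − A‖ ≤ ρ_Δ` with `ρ_A + (ψ_A/ρ_A) ρ_Δ < 1`, and
`‖C‖ ≤ 1`, then `‖Ô(C) − O(C)‖ ≤ (ψ_A/ρ_A)² ρ_Δ / (1 − ρ_A − (ψ_A/ρ_A) ρ_Δ)²`. -/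
theorem obs_matrix_perturbation {r n : ℕ} (A Ahat : Matrix (Fin r) (Fin r) ℝ)
    (C : Matrix (Fin n) (Fin r) ℝ) (ψA ρA ρΔ : ℝ)
    (hψ : 1 ≤ ψA) (hρ0 : 0 < ρA) (hρ1 : ρA < 1)
    (hA : ∀ t : ℕ, ‖A ^ t‖ ≤ ψA * ρA ^ (t - 1 : ℤ))
    (hΔ : ‖Ahat - A‖ ≤ ρΔ) (hsmall : ρA + ψA / ρA * ρΔ < 1)
    (hC : ‖C‖ ≤ 1) :
    ‖obsMatrix Ahat C - obsMatrix A C‖ ≤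
      (ψA / ρA) ^ 2 * ρΔ / (1 - ρA - ψA / ρA * ρΔ) ^ 2 := by
  set M := ψA / ρA with hM
  set σ := ρA + M * ρΔ with hσ
  have hρΔ0 : 0 ≤ ρΔ := le_trans (norm_nonneg _) hΔ
  have hM1 : 1 ≤ M := by
    rw [hM, le_div_iff₀ hρ0]; nlinarith
  have hM0 : 0 < M := lt_of_lt_of_le one_pos hM1
  have hρσ : ρA ≤ σ := by nlinarith
  have hσ0 : 0 < σ := lt_of_lt_of_le hρ0 hρσ
  have hσ1 : σ < 1 := hsmall
  -- uniform bound on powers of A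
  have hA' : ∀ t : ℕ, ‖A ^ t‖ ≤ M * ρA ^ t := by
    intro t
    have he : ψA * ρA ^ ((t : ℤ) - 1) = M * ρA ^ t := by
      rw [zpow_sub₀ (ne_of_gt hρ0), zpow_natCast, zpow_one, hM]
      field_simp
    linarith [hA t, he ▸ hA t]
  -- bound on powers of Ahat
  have hAhat : ∀ m : ℕ, ‖Ahat ^ m‖ ≤ M * σ ^ m := by
    intro m
    induction m using Nat.strong_induction_on with
    | _ m ih =>
      have hid : Ahat ^ m - A ^ m
          = ∑ k ∈ Finset.range m, Ahat ^ (m - 1 - k) * (Ahat - A) * A ^ k :=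
        sub_pow_eq_sum Ahat A m
      have h1 : ‖Ahat ^ m‖ ≤ ‖A ^ m‖
          + ∑ k ∈ Finset.range m, ‖Ahat ^ (m - 1 - k) * (Ahat - A) * A ^ k‖ := by
        calc ‖Ahat ^ m‖ = ‖A ^ m + (Ahat ^ m - A ^ m)‖ := by congr 1; abel
          _ ≤ ‖A ^ m‖ + ‖Ahat ^ m - A ^ m‖ := norm_add_le _ _
          _ ≤ _ := by rw [hid]; exact add_le_add le_rfl (norm_sum_le _ _)
      have h2 : ∀ k ∈ Finset.range m, ‖Ahat ^ (m - 1 - k) * (Ahat - A) * A ^ k‖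
          ≤ M * σ ^ (m - 1 - k) * ρΔ * (M * ρA ^ k) := by
        intro k hk
        rw [Finset.mem_range] at hk
        have hk' : m - 1 - k < m := by omega
        have hih := ih _ hk'
        have hAk := hA' k
        calc ‖Ahat ^ (m - 1 - k) * (Ahat - A) * A ^ k‖
            ≤ ‖Ahat ^ (m - 1 - k) * (Ahat - A)‖ * ‖A ^ k‖ := Matrix.l2_opNorm_mul _ _
          _ ≤ ‖Ahat ^ (m - 1 - k)‖ * ‖Ahat - A‖ * ‖A ^ k‖ :=
              mul_le_mul_of_nonneg_right (Matrix.l2_opNorm_mul _ _) (norm_nonneg _)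
          _ ≤ M * σ ^ (m - 1 - k) * ρΔ * (M * ρA ^ k) := by
              gcongr
      have hgeom : (∑ k ∈ Finset.range m, ρA ^ k * σ ^ (m - 1 - k)) * (ρA - σ)
          = ρA ^ m - σ ^ m := geom_sum₂_mul ρA σ m
      calc ‖Ahat ^ m‖
          ≤ M * ρA ^ m + ∑ k ∈ Finset.range m, M * σ ^ (m - 1 - k) * ρΔ * (M * ρA ^ k) :=
            le_trans h1 (add_le_add (hA' m) (Finset.sum_le_sum h2))
        _ = M * ρA ^ m + M * ((∑ k ∈ Finset.range m, ρA ^ k * σ ^ (m - 1 - k)) * (M * ρΔ)) := by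
            rw [Finset.sum_mul, Finset.mul_sum]
            congr 1
            apply Finset.sum_congr rfl
            intro k _
            ring
        _ = M * σ ^ m := by linear_combination (-M) * hgeom
  -- bound on difference of powers
  have hdiff : ∀ m : ℕ, ‖Ahat ^ m - A ^ m‖ ≤ (m : ℝ) * (M ^ 2 * ρΔ * σ ^ (m - 1)) := by
    intro m
    rw [sub_pow_eq_sum]
    calc ‖∑ k ∈ Finset.range m, Ahat ^ (m - 1 - k) * (Ahat - A) * A ^ k‖
        ≤ ∑ k ∈ Finset.range m, ‖Ahat ^ (m - 1 - k) * (Ahat - A) * A ^ k‖ := norm_sum_le _ _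
      _ ≤ ∑ _k ∈ Finset.range m, M ^ 2 * ρΔ * σ ^ (m - 1) := by
          apply Finset.sum_le_sum
          intro k hk
          rw [Finset.mem_range] at hk
          have e1 : ‖Ahat ^ (m - 1 - k) * (Ahat - A) * A ^ k‖
              ≤ M * σ ^ (m - 1 - k) * ρΔ * (M * ρA ^ k) := by
            calc ‖Ahat ^ (m - 1 - k) * (Ahat - A) * A ^ k‖
                ≤ ‖Ahat ^ (m - 1 - k) * (Ahat - A)‖ * ‖A ^ k‖ := Matrix.l2_opNorm_mul _ _
              _ ≤ ‖Ahat ^ (m - 1 - k)‖ * ‖Ahat - A‖ * ‖A ^ k‖ :=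
                  mul_le_mul_of_nonneg_right (Matrix.l2_opNorm_mul _ _) (norm_nonneg _)
              _ ≤ M * σ ^ (m - 1 - k) * ρΔ * (M * ρA ^ k) := by
                  gcongr
                  exacts [hAhat _, hA' k]
          have e2 : M * σ ^ (m - 1 - k) * ρΔ * (M * ρA ^ k) ≤ M ^ 2 * ρΔ * σ ^ (m - 1) := by
            have e3 : ρA ^ k ≤ σ ^ k := pow_le_pow_left₀ (le_of_lt hρ0) hρσ k
            have e4 : σ ^ (m - 1 - k) * σ ^ k = σ ^ (m - 1) := by
              rw [← pow_add]
              congr 1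
              omega
            calc M * σ ^ (m - 1 - k) * ρΔ * (M * ρA ^ k)
                ≤ M * σ ^ (m - 1 - k) * ρΔ * (M * σ ^ k) := by
                  gcongr
              _ = M ^ 2 * ρΔ * (σ ^ (m - 1 - k) * σ ^ k) := by ring
              _ = M ^ 2 * ρΔ * σ ^ (m - 1) := by rw [e4]
          exact le_trans e1 e2
      _ = (m : ℝ) * (M ^ 2 * ρΔ * σ ^ (m - 1)) := by
          rw [Finset.sum_const, Finset.card_range, nsmul_eq_mul]
  -- series bound
  have hseries : ∀ N : ℕ, ∑ i ∈ Finset.range N, (i : ℝ) * σ ^ (i - 1) ≤ 1 / (1 - σ) ^ 2 := by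
    intro N
    cases N with
    | zero =>
      simp only [Finset.range_zero, Finset.sum_empty]
      positivity
    | succ N =>
      rw [Finset.sum_range_succ']
      simp only [Nat.cast_zero, zero_mul, add_zero, Nat.add_sub_cancel, Nat.cast_add,
        Nat.cast_one]
      have hsplit : ∀ j ∈ Finset.range N, ((j : ℝ) + 1) * σ ^ j = σ ^ j + (j : ℝ) * σ ^ j := by
        intro j _; ring
      rw [Finset.sum_congr rfl hsplit, Finset.sum_add_distrib]
      have hs1 : ∑ j ∈ Finset.range N, σ ^ j ≤ 1 / (1 - σ) := by
        have := Summable.sum_le_tsum (Finset.range N) (fun i _ => by positivity)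
          (summable_geometric_of_lt_one (le_of_lt hσ0) hσ1)
        rwa [tsum_geometric_of_lt_one (le_of_lt hσ0) hσ1, ← one_div] at this
      have hs2 : ∑ j ∈ Finset.range N, (j : ℝ) * σ ^ j ≤ σ / (1 - σ) ^ 2 := by
        have hsm : Summable (fun j : ℕ => (j : ℝ) * σ ^ j) := by
          have := summable_pow_mul_geometric_of_norm_lt_one 1
            (r := σ) (by rw [Real.norm_eq_abs, abs_of_pos hσ0]; exact hσ1)
          simpa using this
        have := Summable.sum_le_tsum (Finset.range N) (fun i _ => by positivity) hsm
        rwa [tsum_coe_mul_geometric_of_norm_lt_one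
          (by rw [Real.norm_eq_abs, abs_of_pos hσ0]; exact hσ1)] at this
      have h1σ : 0 < 1 - σ := by linarith
      have hiden : 1 / (1 - σ) + σ / (1 - σ) ^ 2 = 1 / (1 - σ) ^ 2 := by
        field_simp
        ring
      linarith
  -- assembly
  have hterm : ∀ i : Fin r, ‖embMat r n i * (C * (Ahat ^ (i : ℕ) - A ^ (i : ℕ)))‖
      ≤ ((i : ℕ) : ℝ) * (M ^ 2 * ρΔ * σ ^ ((i : ℕ) - 1)) := by
    intro i
    calc ‖embMat r n i * (C * (Ahat ^ (i : ℕ) - A ^ (i : ℕ)))‖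
        ≤ ‖embMat r n i‖ * ‖C * (Ahat ^ (i : ℕ) - A ^ (i : ℕ))‖ := Matrix.l2_opNorm_mul _ _
      _ ≤ 1 * (‖C‖ * ‖Ahat ^ (i : ℕ) - A ^ (i : ℕ)‖) := by
          gcongr
          exacts [embMat_norm_le r n i, Matrix.l2_opNorm_mul _ _]
      _ ≤ 1 * (1 * ‖Ahat ^ (i : ℕ) - A ^ (i : ℕ)‖) := by
          gcongr
      _ = ‖Ahat ^ (i : ℕ) - A ^ (i : ℕ)‖ := by ring
      _ ≤ _ := hdiff _
  have h1σ : 0 < 1 - σ := by linarith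
  calc ‖obsMatrix Ahat C - obsMatrix A C‖
      = ‖∑ i : Fin r, embMat r n i * (C * (Ahat ^ (i : ℕ) - A ^ (i : ℕ)))‖ := by
        rw [obs_decomp]
    _ ≤ ∑ i : Fin r, ‖embMat r n i * (C * (Ahat ^ (i : ℕ) - A ^ (i : ℕ)))‖ := norm_sum_le _ _
    _ ≤ ∑ i : Fin r, ((i : ℕ) : ℝ) * (M ^ 2 * ρΔ * σ ^ ((i : ℕ) - 1)) :=
        Finset.sum_le_sum fun i _ => hterm i
    _ = M ^ 2 * ρΔ * ∑ i ∈ Finset.range r, (i : ℝ) * σ ^ (i - 1) := by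
        rw [Fin.sum_univ_eq_sum_range (fun i => ((i : ℕ) : ℝ) * (M ^ 2 * ρΔ * σ ^ ((i : ℕ) - 1))),
          Finset.mul_sum]
        apply Finset.sum_congr rfl
        intro k _
        ring
    _ ≤ M ^ 2 * ρΔ * (1 / (1 - σ) ^ 2) := by
        have := hseries r
        have hnn : (0:ℝ) ≤ M ^ 2 * ρΔ := by positivity
        exact mul_le_mul_of_nonneg_left this hnn
    _ = M ^ 2 * ρΔ / (1 - ρA - M * ρΔ) ^ 2 := by
        have hss : 1 - ρA - M * ρΔ = 1 - σ := by rw [hσ]; ring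
        rw [hss]
        ring
end
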